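/- arXiv:1308.6796 — 4 statements merged into one kernel-verified Lean document; each statement's English description precedes it below -/
import Mathlib

section
/- Let $n \geq 4$, $m < d$ be natural numbers. Define $e = \lfloor (\binom{d+n}{n} - \binom{m+n-1}{n})/(d+1) \rfloor$ and $r = \binom{d+n}{n} - \binom{m+n-1}{n} - e(d+1)$, and then $e' = \lfloor (\binom{d-1+n}{n} - \binom{m+n-1}{n} - r)/d \rfloor$. Then $e' \geq 0$. -/
/-! Since `e` is the floor of `N / (d + 1)`, `r = N - e (d + 1)` is a remainder, so `r ≤ d`; and
`C(d - 1 + n, n) ≥ C(m + n - 1, n) + d`, so the numerator of `e'` is nonnegative. -/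

theorem Nat.add_one_le_add_choose (k : ℕ) {j : ℕ} (hj : 1 ≤ j) : k + 1 ≤ (k + j).choose j :=
  calc k + 1 = (k + 1).choose k := (Nat.choose_succ_self_right k).symm
    _ ≤ (k + j).choose k := Nat.choose_le_choose k (by omega)
    _ = (k + j).choose j := Nat.choose_symm_add

/-- Pascal's rule splits `C(d - 1 + n, n)` into `C(d - 2 + n, n) ≥ C(m + n - 1, n)` and
`C(d - 2 + n, n - 1) ≥ d`. -/
theorem Nat.choose_add_le_choose {n m d : ℕ} (hn : 2 ≤ n) (hmd : m < d) :
    (m + n - 1).choose n + d ≤ (d - 1 + n).choose n := by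
  obtain ⟨j, rfl⟩ : ∃ j, n = j + 1 := ⟨n - 1, by omega⟩
  obtain ⟨k, rfl⟩ : ∃ k, d = k + 1 := ⟨d - 1, by omega⟩
  have hsplit : (k + 1 - 1 + (j + 1)).choose (j + 1) = (k + j).choose j + (k + j).choose (j + 1) :=
    Nat.choose_succ_succ' (k + j) j
  have hle : (m + (j + 1) - 1).choose (j + 1) ≤ (k + j).choose (j + 1) :=
    Nat.choose_le_choose _ (by omega)
  have := Nat.add_one_le_add_choose k (j := j) (by omega)
  omega

theorem stmt_0_general (n m d : ℕ) (hn : 4 ≤ n) (hmd : m < d)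
    (e e' : ℤ) (r : ℤ)
    (he : e = ⌊((((d + n).choose n : ℚ)) - ((m + n - 1).choose n : ℚ)) / ((d : ℚ) + 1)⌋)
    (hr : r = ((d + n).choose n : ℤ) - ((m + n - 1).choose n : ℤ) - e * ((d : ℤ) + 1))
    (he' : e' = ⌊((((d - 1 + n).choose n : ℚ)) - ((m + n - 1).choose n : ℚ) - (r : ℚ)) / (d : ℚ)⌋) :
    0 ≤ e' := by
  have hr_lt : (r : ℚ) < d + 1 := by
    have := Int.sub_floor_div_mul_lt
      (((d + n).choose n : ℚ) - ((m + n - 1).choose n : ℚ)) (b := (d : ℚ) + 1) (by positivity)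
    rw [← he] at this
    simpa only [hr, Int.cast_sub, Int.cast_mul, Int.cast_add, Int.cast_natCast, Int.cast_one]
      using this
  have hr_le : (r : ℚ) ≤ d := by
    have : r < (d : ℤ) + 1 := by exact_mod_cast hr_lt
    exact_mod_cast Int.lt_add_one_iff.mp this
  have hchoose : ((m + n - 1).choose n : ℚ) + d ≤ (d - 1 + n).choose n := by
    exact_mod_cast Nat.choose_add_le_choose (by omega) hmd
  rw [he', Int.floor_nonneg]
  exact div_nonneg (by linarith) (Nat.cast_nonneg d)

theorem stmt_0 (n m d : ℕ) (hn : 4 ≤ n) (hm : 1 ≤ m) (hmd : m < d)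
    (e e' : ℤ) (r : ℤ)
    (he : e = ⌊((((d + n).choose n : ℚ)) - ((m + n - 1).choose n : ℚ)) / ((d : ℚ) + 1)⌋)
    (hr : r = ((d + n).choose n : ℤ) - ((m + n - 1).choose n : ℤ) - e * ((d : ℤ) + 1))
    (he' : e' = ⌊((((d - 1 + n).choose n : ℚ)) - ((m + n - 1).choose n : ℚ) - (r : ℚ)) / (d : ℚ)⌋) :
    0 ≤ e' :=
  stmt_0_general n m d hn hmd e e' r he hr he'
end

section
/- Let $n \geq 4$, $m < d$ be natural numbers. Define $e = \lfloor (\binom{d+n}{n} - \binom{m+n-1}{n})/(d+1) \rfloor$, $r = \binom{d+n}{n} - \binom{m+n-1}{n} - e(d+1)$, $e' = \lfloor (\binom{d-1+n}{n} - \binom{m+n-1}{n} - r)/d \rfloor$, and $r' = \binom{d-1+n}{n} - \binom{m+n-1}{n} - r - e'd$. Then $e - e' - 2r' \geq 0$. -/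
/-!
Write `A = C(d+n,n)`, `A' = C(d-1+n,n)`, `B = C(m+n-1,n)`. Eliminating `A` with
`d A = (d+n) A'` gives

  `d (d+1) (e - e' - 2r') = (n-1) A' + B + r - (2d² + d - 1) r'`.

Since `r, B ≥ 0` and `r' ≤ d - 1`, the right side exceeds `-d(d+1)` as soon as
`(n-1) A' > 2d³ - 2d² - 3d + 1`, which for `n ≥ 4` follows from `A' ≥ C(d+3,4)`;
hence the integer `e - e' - 2r'` is greater than `-1`.
-/

theorem Int.sub_floor_div_mul_mem_Ico (x : ℤ) {b : ℕ} (hb : 0 < b) :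
    x - ⌊(x : ℚ) / b⌋ * b ∈ Set.Ico 0 (b : ℤ) := by
  rw [mul_comm, ← Int.mod_nat_eq_sub_mul_floor_rat_div]
  exact ⟨Int.emod_nonneg _ (by omega), Int.emod_lt_of_pos _ (by omega)⟩

theorem Nat.choose_add_mul_pred {d : ℕ} (hd : 1 ≤ d) (n : ℕ) :
    (d - 1 + n).choose n * (d + n) = (d + n).choose n * d := by
  simpa [show d - 1 + n + 1 = d + n by omega] using Nat.choose_mul_succ_eq (d - 1 + n) n

theorem Nat.choose_four_mul (d : ℕ) :
    24 * (d + 3).choose 4 = d * (d + 1) * (d + 2) * (d + 3) := by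
  have h := Nat.descFactorial_eq_factorial_mul_choose (d + 3) 4
  simp only [Nat.descFactorial_succ, Nat.descFactorial_zero, Nat.add_sub_cancel,
    Nat.factorial, Nat.sub_zero] at h
  rw [show d + 3 - 2 = d + 1 by omega, show d + 3 - 1 = d + 2 by omega] at h
  linarith

theorem Nat.choose_four_le_choose {c n : ℕ} (hn : 4 ≤ n) :
    (c + 4).choose 4 ≤ (c + n).choose n := by
  rw [← Nat.choose_symm_add, ← Nat.choose_symm_add]
  exact Nat.choose_le_choose c (by omega)

theorem cubic_lt_pred_mul_choose {d n : ℕ} (hd : 1 ≤ d) (hn : 4 ≤ n) :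
    2 * (d : ℤ) ^ 3 - 2 * d ^ 2 - 3 * d + 1 < (n - 1) * (d - 1 + n).choose n := by
  have hmono : ((d + 3).choose 4 : ℤ) ≤ (d - 1 + n).choose n := by
    exact_mod_cast show d - 1 + 4 = d + 3 by omega ▸ Nat.choose_four_le_choose (c := d - 1) hn
  have hfour : (24 : ℤ) * (d + 3).choose 4 = d * (d + 1) * (d + 2) * (d + 3) := by
    exact_mod_cast Nat.choose_four_mul d
  have hn' : (4 : ℤ) ≤ n := by exact_mod_cast hn
  have hd' : (1 : ℤ) ≤ d := by exact_mod_cast hd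
  nlinarith [sq_nonneg ((d : ℤ) - 5), mul_le_mul_of_nonneg_left hmono (by linarith : (0 : ℤ) ≤ n - 4)]

theorem stmt_1_general (n m d : ℕ) (hn : 4 ≤ n) (hmd : m < d)
    (e e' : ℤ) (r r' : ℤ)
    (he : e = ⌊((((d + n).choose n : ℚ)) - ((m + n - 1).choose n : ℚ)) / ((d : ℚ) + 1)⌋)
    (hr : r = ((d + n).choose n : ℤ) - ((m + n - 1).choose n : ℤ) - e * ((d : ℤ) + 1))
    (he' : e' = ⌊((((d - 1 + n).choose n : ℚ)) - ((m + n - 1).choose n : ℚ) - (r : ℚ)) / (d : ℚ)⌋)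
    (hr' : r' = ((d - 1 + n).choose n : ℤ) - ((m + n - 1).choose n : ℤ) - r - e' * (d : ℤ)) :
    0 ≤ e - e' - 2 * r' := by
  have hd : 1 ≤ d := by omega
  obtain ⟨hr_nonneg, -⟩ : r ∈ Set.Ico 0 ((d + 1 : ℕ) : ℤ) := by
    have := Int.sub_floor_div_mul_mem_Ico
      (((d + n).choose n : ℤ) - (m + n - 1).choose n) (b := d + 1) (by omega)
    push_cast at this ⊢
    rwa [hr, he]
  obtain ⟨hr'_nonneg, hr'_lt⟩ : r' ∈ Set.Ico 0 (d : ℤ) := by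
    have := Int.sub_floor_div_mul_mem_Ico
      (((d - 1 + n).choose n : ℤ) - (m + n - 1).choose n - r) (b := d) (by omega)
    push_cast at this
    rwa [hr', he']
  have hpascal : ((d - 1 + n).choose n : ℤ) * (d + n) = (d + n).choose n * d := by
    exact_mod_cast Nat.choose_add_mul_pred hd n
  have hexpand : (d : ℤ) * (d + 1) * (e - e' - 2 * r') =
      (n - 1) * (d - 1 + n).choose n + (m + n - 1).choose n + r - (2 * d ^ 2 + d - 1) * r' := by
    linear_combination (d : ℤ) * hr - ((d : ℤ) + 1) * hr' - hpascal
  have hd' : (1 : ℤ) ≤ d := by exact_mod_cast hd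
  have hlower : (d : ℤ) * (d + 1) * (-1) < d * (d + 1) * (e - e' - 2 * r') := by
    rw [hexpand]
    linarith [cubic_lt_pred_mul_choose hd hn, Int.natCast_nonneg ((m + n - 1).choose n),
      mul_le_mul_of_nonneg_left (show r' ≤ d - 1 by omega)
        (by nlinarith : (0 : ℤ) ≤ 2 * d ^ 2 + d - 1)]
  have := lt_of_mul_lt_mul_left hlower (by positivity)
  omega

theorem stmt_1 (n m d : ℕ) (hn : 4 ≤ n) (hm : 1 ≤ m) (hmd : m < d)
    (e e' : ℤ) (r r' : ℤ)
    (he : e = ⌊((((d + n).choose n : ℚ)) - ((m + n - 1).choose n : ℚ)) / ((d : ℚ) + 1)⌋)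
    (hr : r = ((d + n).choose n : ℤ) - ((m + n - 1).choose n : ℤ) - e * ((d : ℤ) + 1))
    (he' : e' = ⌊((((d - 1 + n).choose n : ℚ)) - ((m + n - 1).choose n : ℚ) - (r : ℚ)) / (d : ℚ)⌋)
    (hr' : r' = ((d - 1 + n).choose n : ℤ) - ((m + n - 1).choose n : ℤ) - r - e' * (d : ℤ)) :
    0 ≤ e - e' - 2 * r' :=
  stmt_1_general n m d hn hmd e e' r r' he hr he' hr'
end

section
/- Let $n \geq 4$, $m < d$ be natural numbers. Define $e = \lfloor (\binom{d+n}{n} - \binom{m+n-1}{n})/(d+1) \rfloor$, $r = \binom{d+n}{n} - \binom{m+n-1}{n} - e(d+1)$, $e' = \lfloor (\binom{d-1+n}{n} - \binom{m+n-1}{n} - r)/d \rfloor$, and $r' = \binom{d-1+n}{n} - \binom{m+n-1}{n} - r - e'd$. Then $e' \geq r'$. -/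
/-!
Write `N = C(d+n,n) - C(m+n-1,n)` and `N' = C(d-1+n,n) - C(m+n-1,n) - r`; then `e, r` and
`e', r'` are the quotient and remainder of `N` by `d + 1` and of `N'` by `d`. Since `r ≤ d` and,
by Pascal's rule, `C(d-1+n,n) - C(m+n-1,n) ≥ C(d+n-2,n-1) ≥ C(d+2,3) ≥ d²`, we get
`N' ≥ d(d-1)`, so `e' ≥ d - 1 ≥ r'`.
-/

namespace Nat

theorem add_one_sq_le_choose_add_three_three (a : ℕ) : (a + 1) ^ 2 ≤ (a + 3).choose 3 := by
  have h6 : 6 * (a + 3).choose 3 = (a + 3) * (a + 2) * (a + 1) := by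
    rw [show 6 = (3 : ℕ)! from rfl, ← descFactorial_eq_factorial_mul_choose]
    simp [descFactorial, mul_comm]
  nlinarith [Nat.le_self_pow two_ne_zero a]

theorem choose_add_three_three_le_choose_add (a : ℕ) {k : ℕ} (hk : 3 ≤ k) :
    (a + 3).choose 3 ≤ (a + k).choose k := by
  rw [← choose_symm_add, ← choose_symm_add]
  exact choose_le_choose a (by omega)

theorem choose_add_sq_le_choose {n m d : ℕ} (hn : 4 ≤ n) (hmd : m < d) :
    (m + n - 1).choose n + d ^ 2 ≤ (d - 1 + n).choose n := by
  obtain ⟨a, rfl⟩ : ∃ a, d = a + 1 := ⟨d - 1, by omega⟩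
  obtain ⟨k, rfl⟩ : ∃ k, n = k + 1 := ⟨n - 1, by omega⟩
  have hpascal : (a + 1 - 1 + (k + 1)).choose (k + 1) =
      (a + k).choose k + (a + k).choose (k + 1) := by
    rw [show a + 1 - 1 + (k + 1) = a + k + 1 by omega, choose_succ_succ']
  have hm : (m + (k + 1) - 1).choose (k + 1) ≤ (a + k).choose (k + 1) :=
    choose_le_choose _ (by omega)
  have hsq := (add_one_sq_le_choose_add_three_three a).trans
    (choose_add_three_three_le_choose_add a (k := k) (by omega))
  omega

end Nat

namespace Int

theorem eq_ediv_and_eq_emod_of_eq_floor {x e r : ℤ} {q : ℕ} (he : e = ⌊(x : ℚ) / q⌋)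
    (hr : r = x - e * q) : e = x / q ∧ r = x % q := by
  rw [Rat.floor_intCast_div_natCast] at he
  subst he
  exact ⟨rfl, by rw [hr, emod_def]; ring⟩

theorem emod_le_ediv_of_mul_sub_one_le {x q : ℤ} (hq : 0 < q) (h : q * (q - 1) ≤ x) :
    x % q ≤ x / q := by
  have hmod : x % q ≤ q - 1 := by linarith [emod_lt_of_pos x hq]
  have hdiv : q - 1 ≤ x / q := Int.le_ediv_of_mul_le hq (by linarith)
  exact hmod.trans hdiv

end Int

theorem stmt_2_general (n m d : ℕ) (hn : 4 ≤ n) (hmd : m < d)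
    (e e' : ℤ) (r r' : ℤ)
    (he : e = ⌊((((d + n).choose n : ℚ)) - ((m + n - 1).choose n : ℚ)) / ((d : ℚ) + 1)⌋)
    (hr : r = ((d + n).choose n : ℤ) - ((m + n - 1).choose n : ℤ) - e * ((d : ℤ) + 1))
    (he' : e' = ⌊((((d - 1 + n).choose n : ℚ)) - ((m + n - 1).choose n : ℚ) - (r : ℚ)) / (d : ℚ)⌋)
    (hr' : r' = ((d - 1 + n).choose n : ℤ) - ((m + n - 1).choose n : ℤ) - r - e' * (d : ℤ)) :
    r' ≤ e' := by
  obtain ⟨-, hr⟩ := Int.eq_ediv_and_eq_emod_of_eq_floor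
    (x := ((d + n).choose n : ℤ) - (m + n - 1).choose n) (q := d + 1) (by push_cast; exact he)
    (by push_cast; exact hr)
  have hr_le : r ≤ d := by
    have := Int.emod_lt_of_pos (((d + n).choose n : ℤ) - (m + n - 1).choose n)
      (b := ((d + 1 : ℕ) : ℤ)) (by positivity)
    rw [← hr] at this
    push_cast at this
    omega
  obtain ⟨he', hr'⟩ := Int.eq_ediv_and_eq_emod_of_eq_floor
    (x := ((d - 1 + n).choose n : ℤ) - (m + n - 1).choose n - r) (q := d)
    (by push_cast; exact he')
    hr'
  rw [he', hr']
  have hgap : (((m + n - 1).choose n + d ^ 2 : ℕ) : ℤ) ≤ (d - 1 + n).choose n := by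
    exact_mod_cast Nat.choose_add_sq_le_choose hn hmd
  push_cast at hgap
  exact Int.emod_le_ediv_of_mul_sub_one_le (by omega) (by nlinarith)

theorem stmt_2 (n m d : ℕ) (hn : 4 ≤ n) (hm : 1 ≤ m) (hmd : m < d)
    (e e' : ℤ) (r r' : ℤ)
    (he : e = ⌊((((d + n).choose n : ℚ)) - ((m + n - 1).choose n : ℚ)) / ((d : ℚ) + 1)⌋)
    (hr : r = ((d + n).choose n : ℤ) - ((m + n - 1).choose n : ℤ) - e * ((d : ℤ) + 1))
    (he' : e' = ⌊((((d - 1 + n).choose n : ℚ)) - ((m + n - 1).choose n : ℚ) - (r : ℚ)) / (d : ℚ)⌋)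
    (hr' : r' = ((d - 1 + n).choose n : ℤ) - ((m + n - 1).choose n : ℤ) - r - e' * (d : ℤ)) :
    r' ≤ e' :=
  stmt_2_general n m d hn hmd e e' r r' he hr he' hr'
end

section
/- For all natural numbers $n \geq 4$ and $d \geq 2$ with $m \leq d - 1$: $\binom{d-1+n}{n} - \binom{m+n-1}{n} - d - (d-1)d \geq \binom{d+n-2}{d-1} - d^2$, and moreover $\binom{d+n-2}{d-1} - d^2 \geq \binom{d+2}{3} - d^2 = \binom{d}{3} + \text{(nonnegative)}$, so that $\binom{d-1+n}{n} - \binom{m+n-1}{n} - d - (d-1)d \geq 0$. -/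
/-!
Pascal's rule splits `C(d-1+n, n)` as `C(d-2+n, n) + C(d-2+n, n-1)`. The first summand dominates
`C(m+n-1, n)` because `m ≤ d-1`, and for `n ≥ 4` the second is at least `C(d+2, 3) ≥ d²`, the
last inequality being `(d+2)(d+1) ≥ 6d`, i.e. `(d-1)(d-2) ≥ 0`.
-/

theorem sq_le_choose_add_two_three (d : ℕ) : d ^ 2 ≤ (d + 2).choose 3 := by
  have h : 6 * (d + 2).choose 3 = (d + 2) * (d + 1) * d := by
    rw [show 6 = Nat.factorial 3 from rfl, ← Nat.descFactorial_eq_factorial_mul_choose]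
    simp only [Nat.descFactorial_succ, add_tsub_cancel_right, Nat.add_one_sub_one, tsub_zero,
      Nat.descFactorial_zero, mul_one]
    ring
  rcases d with _ | _ | d
  · simp
  · simp
  · nlinarith [h, Nat.zero_le (d ^ 3 + 3 * d ^ 2 + 2 * d)]

theorem choose_add_three_le_choose_add (a : ℕ) {k : ℕ} (hk : 3 ≤ k) :
    (a + 3).choose 3 ≤ (a + k).choose k := by
  rw [← Nat.choose_symm_add, ← Nat.choose_symm_add]
  exact Nat.choose_le_choose a (by omega)

theorem sq_add_choose_le_choose_succ {d m k : ℕ} (hk : 3 ≤ k) (hm : m ≤ d) :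
    (d + 1) ^ 2 + (m + k).choose (k + 1) ≤ (d + k + 1).choose (k + 1) := by
  have hsq : (d + 1) ^ 2 ≤ (d + k).choose k :=
    (sq_le_choose_add_two_three (d + 1)).trans (choose_add_three_le_choose_add d hk)
  have hmono : (m + k).choose (k + 1) ≤ (d + k).choose (k + 1) :=
    Nat.choose_le_choose (k + 1) (by omega)
  rw [Nat.choose_succ_succ']
  exact add_le_add hsq hmono

theorem stmt_6_general (n m d : ℕ) (hn : 4 ≤ n) (hd : 2 ≤ d) (hmd : m ≤ d - 1) :
    0 ≤ ((d - 1 + n).choose n : ℤ) - ((m + n - 1).choose n : ℤ) - (d : ℤ) - ((d : ℤ) - 1) * d := by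
  obtain ⟨k, rfl⟩ : ∃ k, n = k + 1 := ⟨n - 1, by omega⟩
  obtain ⟨e, rfl⟩ : ∃ e, d = e + 1 := ⟨d - 1, by omega⟩
  have key : ((e + 1) ^ 2 + (m + k).choose (k + 1) : ℤ) ≤ (e + k + 1).choose (k + 1) := by
    exact_mod_cast sq_add_choose_le_choose_succ (by omega) (by omega)
  rw [show e + 1 - 1 + (k + 1) = e + k + 1 by omega, show m + (k + 1) - 1 = m + k by omega]
  push_cast
  linarith

theorem stmt_6 (n m d : ℕ) (hn : 4 ≤ n) (hd : 2 ≤ d) (hm : 1 ≤ m) (hmd : m ≤ d - 1) :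
    0 ≤ ((d - 1 + n).choose n : ℤ) - ((m + n - 1).choose n : ℤ) - (d : ℤ) - ((d : ℤ) - 1) * d :=
  stmt_6_general n m d hn hd hmd
end
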